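/- arXiv:2605.14459 — 2 statements merged into one kernel-verified Lean document; each statement's English description precedes it below -/
import Mathlib

section
/- Let $w_\varepsilon(x) = \exp((1-x)/(\varepsilon\beta_*))$ with $\beta_* = 2/\sqrt{\underline{b}}$, and let $b \in L^\infty(-1,1)$ with $b \ge \underline{b} > 0$ a.e. Then for every $u \in H^1(-1,1)$, setting $v_u = u\, w_\varepsilon^2$, the bilinear form $B_\varepsilon(u, v_u) = \varepsilon^2 \int u' v_u' + \int b\, u\, v_u$ satisfies $B_\varepsilon(u, v_u) \ge C_1 \int_{-1}^1 (\varepsilon^2 (u')^2 + u^2)\, w_\varepsilon^2\,dx$ with $C_1 = \min\{1/3, 5\underline{b}/8\}$ independent of $\varepsilon \in (0,1]$. -/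
/-!
With `s = √b̲` one has `2 / (ε β*) = s / ε`, so `(u w²)' = (u' - (s/ε) u) w²` and the integrand of
`B_ε(u, u w²)` is `(a² - s a u + b u²) w²` with `a = ε u'`. Since `b ≥ s²`, this quadratic form
dominates `a²/3 + 5 s² u²/8`: the difference is at least `(4a - 3su)² / 24`.
-/

open intervalIntegral Real MeasureTheory

lemma min_mul_sq_add_sq_le (s a c bx : ℝ) (hb : s ^ 2 ≤ bx) :
    min (1 / 3) (5 * s ^ 2 / 8) * (a ^ 2 + c ^ 2) ≤ a ^ 2 - s * a * c + bx * c ^ 2 :=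
  calc min (1 / 3) (5 * s ^ 2 / 8) * (a ^ 2 + c ^ 2)
      = min (1 / 3) (5 * s ^ 2 / 8) * a ^ 2 + min (1 / 3) (5 * s ^ 2 / 8) * c ^ 2 := by ring
    _ ≤ 1 / 3 * a ^ 2 + 5 * s ^ 2 / 8 * c ^ 2 :=
      add_le_add (mul_le_mul_of_nonneg_right (min_le_left _ _) (sq_nonneg a))
        (mul_le_mul_of_nonneg_right (min_le_right _ _) (sq_nonneg c))
    _ ≤ a ^ 2 - s * a * c + bx * c ^ 2 := by
      nlinarith [sq_nonneg (4 * a - 3 * s * c), mul_le_mul_of_nonneg_right hb (sq_nonneg c)]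

lemma min_mul_weighted_sq_le (s ε a c bx W : ℝ) (hε : ε ≠ 0) (hb : s ^ 2 ≤ bx) :
    min (1 / 3) (5 * s ^ 2 / 8) * ((ε ^ 2 * a ^ 2 + c ^ 2) * W ^ 2)
      ≤ ε ^ 2 * (a * ((a - s / ε * c) * W ^ 2)) + bx * c * (c * W ^ 2) :=
  calc min (1 / 3) (5 * s ^ 2 / 8) * ((ε ^ 2 * a ^ 2 + c ^ 2) * W ^ 2)
      = min (1 / 3) (5 * s ^ 2 / 8) * ((ε * a) ^ 2 + c ^ 2) * W ^ 2 := by ring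
    _ ≤ ((ε * a) ^ 2 - s * (ε * a) * c + bx * c ^ 2) * W ^ 2 :=
      mul_le_mul_of_nonneg_right (min_mul_sq_add_sq_le s _ c bx hb) (sq_nonneg W)
    _ = ε ^ 2 * (a * ((a - s / ε * c) * W ^ 2)) + bx * c * (c * W ^ 2) := by field_simp

lemma deriv_mul_exp_div_sq {u : ℝ → ℝ} {x : ℝ} (k : ℝ) (hu : DifferentiableAt ℝ u x) :
    deriv (fun y => u y * exp ((1 - y) / k) ^ 2) x
      = (deriv u x - 2 / k * u x) * exp ((1 - x) / k) ^ 2 := by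
  have hexp : HasDerivAt (fun y => exp ((1 - y) / k)) (exp ((1 - x) / k) * (-1 / k)) x :=
    (((hasDerivAt_id x).const_sub 1).div_const k).exp
  rw [(hu.hasDerivAt.fun_mul (hexp.fun_pow 2)).deriv]
  push_cast
  ring

theorem stmt6_general
    (bl : ℝ) (hbl : 0 < bl)
    (ε : ℝ) (hε : ε ∈ Set.Ioc (0:ℝ) 1)
    (b u : ℝ → ℝ)
    (hb : ∀ x ∈ Set.Icc (-1:ℝ) 1, bl ≤ b x)
    (hu : ContDiff ℝ 1 u)
    (hIb : IntervalIntegrable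
      (fun x => b x * u x * (u x * (Real.exp ((1 - x) / (ε * (2 / Real.sqrt bl))))^2))
      volume (-1) 1) :
    let β : ℝ := 2 / Real.sqrt bl
    let w : ℝ → ℝ := fun x => Real.exp ((1 - x) / (ε * β))
    (ε^2 * (∫ x in (-1:ℝ)..1, deriv u x * deriv (fun y => u y * (w y)^2) x)
        + ∫ x in (-1:ℝ)..1, b x * u x * (u x * (w x)^2))
      ≥ min (1/3) (5 * bl / 8)
        * ∫ x in (-1:ℝ)..1, (ε^2 * (deriv u x)^2 + (u x)^2) * (w x)^2 := by
  intro β w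
  set s := √bl
  have hε0 : ε ≠ 0 := hε.1.ne'
  have hs0 : s ≠ 0 := (sqrt_pos.2 hbl).ne'
  have hsq : s ^ 2 = bl := sq_sqrt hbl.le
  have hdiff : Differentiable ℝ u := hu.differentiable one_ne_zero
  have hrate : 2 / (ε * β) = s / ε := by
    show 2 / (ε * (2 / s)) = s / ε
    field_simp
  have hv : ∀ x, deriv (fun y => u y * w y ^ 2) x = (deriv u x - s / ε * u x) * w x ^ 2 :=
    fun x => by rw [← hrate]; exact deriv_mul_exp_div_sq _ (hdiff x)
  replace hIb : IntervalIntegrable (fun x => b x * u x * (u x * w x ^ 2)) volume (-1) 1 := hIb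
  have hcu' : Continuous (deriv u) := hu.continuous_deriv le_rfl
  have hI : IntervalIntegrable
      (fun x => ε ^ 2 * (deriv u x * ((deriv u x - s / ε * u x) * w x ^ 2))) volume (-1) 1 :=
    (by fun_prop : Continuous _).intervalIntegrable _ _
  simp_rw [hv]
  rw [← intervalIntegral.integral_const_mul, ← intervalIntegral.integral_add hI hIb,
    ← intervalIntegral.integral_const_mul, ge_iff_le]
  refine integral_mono_on (by norm_num) ((by fun_prop : Continuous _).intervalIntegrable _ _)
    (hI.add hIb) fun x hx => ?_
  rw [← hsq]
  exact min_mul_weighted_sq_le s ε _ _ _ _ hε0 (hsq ▸ hb x hx)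

/-- Weighted coercivity: for `w_ε(x) = exp((1-x)/(ε β*))`, `β* = 2/√b̲`,
`b ∈ L^∞` with `b ≥ b̲ > 0`, and `v_u = u w_ε²`, one has
`B_ε(u, v_u) ≥ C₁ ∫ (ε² (u')² + u²) w_ε²` with `C₁ = min{1/3, 5 b̲/8}`
independent of `ε ∈ (0,1]`. -/
theorem stmt6
    (bl : ℝ) (hbl : 0 < bl)
    (ε : ℝ) (hε : ε ∈ Set.Ioc (0:ℝ) 1)
    (b u : ℝ → ℝ) (hmb : Measurable b)
    (hb : ∀ x ∈ Set.Icc (-1:ℝ) 1, bl ≤ b x)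
    (hu : ContDiff ℝ 1 u)
    (hIb : IntervalIntegrable
      (fun x => b x * u x * (u x * (Real.exp ((1 - x) / (ε * (2 / Real.sqrt bl))))^2))
      volume (-1) 1) :
    let β : ℝ := 2 / Real.sqrt bl
    let w : ℝ → ℝ := fun x => Real.exp ((1 - x) / (ε * β))
    (ε^2 * (∫ x in (-1:ℝ)..1, deriv u x * deriv (fun y => u y * (w y)^2) x)
        + ∫ x in (-1:ℝ)..1, b x * u x * (u x * (w x)^2))
      ≥ min (1/3) (5 * bl / 8)
        * ∫ x in (-1:ℝ)..1, (ε^2 * (deriv u x)^2 + (u x)^2) * (w x)^2 :=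
  stmt6_general bl hbl ε hε b u hb hu hIb
end

section
/- For every $\tau \in (0,1]$ there exist real parameters $\alpha, \beta, \gamma, \delta$ such that the function $g(x) = \gamma\tanh(\alpha x + \beta) + \delta$ (a depth-2 tanh network with one hidden neuron, 4 nonzero parameters) satisfies $|e^{-x} - g(x)| \le e^{-\tau}$ and $|-e^{-x} - g'(x)| \le e^{-\tau}$ for all $x \ge 0$. -/
open Real

/-! The rescaled logistic function `x ↦ 1 / (c + eˣ)` is a single tanh neuron, since
`1 - tanh (t / 2) = 2 / (1 + eᵗ)`. For `x ≥ 0` it differs from `e⁻ˣ` by at most `c` and its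
derivative differs from `-e⁻ˣ` by at most `2c`; take `c = e^{-τ} / 2`. -/

lemma one_sub_tanh_half (t : ℝ) : 1 - tanh (t / 2) = 2 / (1 + exp t) := by
  have hexp : exp t = exp (t / 2) ^ 2 := by rw [← exp_nat_mul]; ring_nf
  rw [tanh_eq_sinh_div_cosh, sinh_eq, cosh_eq, hexp, exp_neg]
  field_simp
  ring

lemma tanh_neuron_eq_inv_const_add_exp {c : ℝ} (hc : 0 < c) (x : ℝ) :
    -(2 * c)⁻¹ * tanh (1 / 2 * x + -log c / 2) + (2 * c)⁻¹ = (c + exp x)⁻¹ := by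
  have hsub := one_sub_tanh_half (x - log c)
  rw [exp_sub, exp_log hc] at hsub
  calc -(2 * c)⁻¹ * tanh (1 / 2 * x + -log c / 2) + (2 * c)⁻¹
      = (2 * c)⁻¹ * (1 - tanh ((x - log c) / 2)) := by ring_nf
    _ = (c + exp x)⁻¹ := by
      rw [hsub]
      field_simp

lemma hasDerivAt_inv_const_add_exp {c : ℝ} (hc : 0 ≤ c) (x : ℝ) :
    HasDerivAt (fun y => (c + exp y)⁻¹) (-exp x / (c + exp x) ^ 2) x :=
  ((hasDerivAt_exp x).const_add c).inv (by positivity)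

lemma abs_exp_neg_sub_inv_const_add_exp_le {c x : ℝ} (hc : 0 ≤ c) (hx : 0 ≤ x) :
    |exp (-x) - (c + exp x)⁻¹| ≤ c := by
  have hE : 1 ≤ exp x := one_le_exp hx
  have hdiff : exp (-x) - (c + exp x)⁻¹ = c / (exp x * (c + exp x)) := by
    rw [exp_neg]
    field_simp
    ring
  rw [hdiff, abs_of_nonneg (by positivity)]
  exact div_le_self hc (by nlinarith)

lemma abs_neg_exp_neg_sub_neg_exp_div_sq_le {c x : ℝ} (hc : 0 ≤ c) (hx : 0 ≤ x) :
    |-exp (-x) - -exp x / (c + exp x) ^ 2| ≤ 2 * c := by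
  have hE : 1 ≤ exp x := one_le_exp hx
  have hdiff : -exp (-x) - -exp x / (c + exp x) ^ 2
      = -(c * (2 * exp x + c) / (exp x * (c + exp x) ^ 2)) := by
    rw [exp_neg]
    field_simp
    ring
  rw [hdiff, abs_neg, abs_of_nonneg (by positivity), div_le_iff₀ (by positivity)]
  nlinarith [mul_nonneg hc (sub_nonneg.2 hE), mul_nonneg (mul_nonneg hc hc) (sub_nonneg.2 hE)]

theorem stmt19_general (τ : ℝ) :
    ∃ α β γ δ : ℝ, ∀ x : ℝ, 0 ≤ x →
      |Real.exp (-x) - (γ * Real.tanh (α * x + β) + δ)| ≤ Real.exp (-τ)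
      ∧ |(-Real.exp (-x))
          - deriv (fun y => γ * Real.tanh (α * y + β) + δ) x| ≤ Real.exp (-τ) := by
  set c := exp (-τ) / 2 with hc_def
  have hc : 0 < c := by positivity
  refine ⟨1 / 2, -log c / 2, -(2 * c)⁻¹, (2 * c)⁻¹, fun x hx => ?_⟩
  simp only [tanh_neuron_eq_inv_const_add_exp hc]
  rw [(hasDerivAt_inv_const_add_exp hc.le x).deriv]
  exact ⟨(abs_exp_neg_sub_inv_const_add_exp_le hc.le hx).trans (by linarith : c ≤ exp (-τ)),
    (abs_neg_exp_neg_sub_neg_exp_div_sq_le hc.le hx).trans (by linarith : 2 * c ≤ exp (-τ))⟩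

/-- Single-neuron tanh emulation of the decaying exponential: for every
`τ ∈ (0,1]` there are parameters `α, β, γ, δ` such that
`g(x) = γ tanh(α x + β) + δ` satisfies `|e^{-x} - g(x)| ≤ e^{-τ}` and
`|-e^{-x} - g'(x)| ≤ e^{-τ}` for all `x ≥ 0`. -/
theorem stmt19 (τ : ℝ) (hτ : τ ∈ Set.Ioc (0:ℝ) 1) :
    ∃ α β γ δ : ℝ, ∀ x : ℝ, 0 ≤ x →
      |Real.exp (-x) - (γ * Real.tanh (α * x + β) + δ)| ≤ Real.exp (-τ)
      ∧ |(-Real.exp (-x))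
          - deriv (fun y => γ * Real.tanh (α * y + β) + δ) x| ≤ Real.exp (-τ) :=
  stmt19_general τ
end
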